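/- Let G be a cancellative 3-uniform hypergraph on n vertices with n ≡ 0 (mod 3). Then |E(G)| ≤ t_3(n) = n^3/27, with equality if and only if G is isomorphic to T_3(n). -/

import Mathlib

open Finset

/-- A 3-uniform hypergraph on vertex set `Fin n`, given by its edge set:
every edge is a 3-element subset. -/
def IsThreeGraph {n : ℕ} (E : Finset (Finset (Fin n))) : Prop :=
  ∀ e ∈ E, e.card = 3

/-- `G` is cancellative: there are no three distinct edges `A, B, C` with `B △ C ⊆ A`. -/
def Cancellative {n : ℕ} (E : Finset (Finset (Fin n))) : Prop :=
  ∀ A ∈ E, ∀ B ∈ E, ∀ C ∈ E, A ≠ B → A ≠ C → B ≠ C → ¬ (symmDiff B C ⊆ A)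

/-- The `p`-norm of a vector `x ∈ ℝ^n`. -/
noncomputable def pNorm {n : ℕ} (p : ℝ) (x : Fin n → ℝ) : ℝ :=
  (∑ i, |x i| ^ p) ^ (1 / p)

/-- The polynomial form of a 3-graph. -/
noncomputable def polyForm {n : ℕ} (E : Finset (Finset (Fin n))) (x : Fin n → ℝ) : ℝ :=
  3 * ∑ e ∈ E, ∏ i ∈ e, x i

/-- The `p`-spectral radius of a 3-graph: the maximum of the polynomial form over the
unit sphere of the `p`-norm. -/
noncomputable def specRad {n : ℕ} (p : ℝ) (E : Finset (Finset (Fin n))) : ℝ :=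
  sSup {r : ℝ | ∃ x : Fin n → ℝ, pNorm p x = 1 ∧ polyForm E x = r}

/-- The part (among the three parts of sizes ⌊n/3⌋, ⌊(n+1)/3⌋, ⌊(n+2)/3⌋) containing vertex `i`. -/
def part3 (n : ℕ) (i : Fin n) : Fin 3 :=
  if (i : ℕ) < n / 3 then 0 else if (i : ℕ) < n / 3 + (n + 1) / 3 then 1 else 2

/-- The complete 3-partite 3-graph `T_3(n)` with part sizes ⌊n/3⌋, ⌊(n+1)/3⌋, ⌊(n+2)/3⌋:
edges are the triples having exactly one vertex in each part. -/
def T3 (n : ℕ) : Finset (Finset (Fin n)) :=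
  Finset.univ.filter fun e => ∀ k : Fin 3, (e.filter fun i => part3 n i = k).card = 1

/-- `t_3(n)`, the number of edges of `T_3(n)`. -/
def t3 (n : ℕ) : ℕ := (n / 3) * ((n + 1) / 3) * ((n + 2) / 3)

/-- Two 3-graphs on `Fin n` are isomorphic. -/
def IsoTo {n : ℕ} (E₁ E₂ : Finset (Finset (Fin n))) : Prop :=
  ∃ σ : Fin n ≃ Fin n, ∀ e : Finset (Fin n), e ∈ E₁ ↔ e.map σ.toEmbedding ∈ E₂

/-- Two vertices are adjacent if some edge contains both. -/
def Adjacent {n : ℕ} (E : Finset (Finset (Fin n))) (u v : Fin n) : Prop :=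
  u ≠ v ∧ ∃ e ∈ E, u ∈ e ∧ v ∈ e

/-- The link of a vertex `v`: all 2-element sets `S` with `S ∪ {v} ∈ E`. -/
def link {n : ℕ} (E : Finset (Finset (Fin n))) (v : Fin n) : Finset (Finset (Fin n)) :=
  (E.filter fun e => v ∈ e).image fun e => e.erase v

/-- The degree of a vertex: the size of its link. -/
def degree {n : ℕ} (E : Finset (Finset (Fin n))) (v : Fin n) : ℕ := (link E v).card

/-- The transfer `T_v^u(G)`: delete all edges containing `v` and replace `v` for `u`
in all edges containing `u` but not `v`. -/
def transfer {n : ℕ} (E : Finset (Finset (Fin n))) (u v : Fin n) : Finset (Finset (Fin n)) :=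
  (E.filter fun e => v ∉ e) ∪
    ((E.filter fun e => u ∈ e ∧ v ∉ e).image fun e => insert v (e.erase u))

/-- A 3-graph is complete 3-partite: there is a partition of the vertices into three classes
such that the edges are exactly the triples with one vertex in each class. -/
def IsComplete3Partite {n : ℕ} (E : Finset (Finset (Fin n))) : Prop :=
  ∃ P : Fin n → Fin 3,
    ∀ e : Finset (Fin n), e ∈ E ↔ ∀ k : Fin 3, (e.filter fun i => P i = k).card = 1

/-- `G` has maximum `p`-spectral radius among all cancellative 3-graphs on `n` vertices. -/
def MaxSpectral {n : ℕ} (p : ℝ) (E : Finset (Finset (Fin n))) : Prop :=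
  IsThreeGraph E ∧ Cancellative E ∧
    ∀ E' : Finset (Finset (Fin n)), IsThreeGraph E' → Cancellative E' →
      specRad p E' ≤ specRad p E

/-!
The bound goes through the Lagrangian `λ(G) = max {∑_{e ∈ G} ∏_{i ∈ e} x_i : x ∈ Δ}` over the
standard simplex. Take a maximiser `x` of minimal support `S`. If a pair `u, v ∈ S` lay in no edge
inside `S`, the value would be affine along `x + t (δ_u - δ_v)`, and weight could be pushed off `u`
or `v`; so every pair of `S` lies in an edge inside `S`, and by cancellativity in exactly one. The
Lagrange conditions `∂_v = 3λ` on `S`, summed over this Steiner triple system, give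
`6 |S| λ = 1 - ∑ x_v² ≤ 1 - 1/|S|`, hence `λ ≤ 1/27` as `|S| ≥ 3`; the uniform vector then yields
`27 |E| ≤ n³`.

If `27 |E| = n³`, the uniform vector is a maximiser. Its Lagrange conditions make `G` regular of
degree `n²/9`, and moving all the weight of `v` onto a non-neighbour `u` keeps the value, so the
Lagrange conditions at the new maximiser give `u` and `v` equal codegrees with every other vertex.
Hence non-adjacency is an equivalence relation, the common neighbours of an adjacent pair lie in a
single class, and counting codegrees from a largest class forces three classes of size `n/3` with
every transversal triple an edge.
-/

open Finset

section Lagrangian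

variable {α : Type*} {E : Finset (Finset α)} {x : α → ℝ}

noncomputable def lagrangePoly (E : Finset (Finset α)) (x : α → ℝ) : ℝ := ∑ e ∈ E, ∏ i ∈ e, x i

lemma lagrangePoly_const {r : ℕ} (hE : ∀ e ∈ E, #e = r) (c : ℝ) :
    lagrangePoly E (fun _ => c) = #E * c ^ r := by
  simp only [lagrangePoly, prod_const]
  rw [sum_congr rfl fun e he => by rw [hE e he], sum_const, nsmul_eq_mul]

variable [DecidableEq α]

noncomputable def lagrangePartial (E : Finset (Finset α)) (x : α → ℝ) (v : α) : ℝ :=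
  ∑ e ∈ E with v ∈ e, ∏ i ∈ e.erase v, x i

noncomputable def lagrangePartial₂ (E : Finset (Finset α)) (x : α → ℝ) (u v : α) : ℝ :=
  ∑ e ∈ E with u ∈ e ∧ v ∈ e, ∏ i ∈ (e.erase u).erase v, x i

def shiftWeight (x : α → ℝ) (u v : α) (t : ℝ) : α → ℝ := x + Pi.single u t - Pi.single v t

variable {u v : α} {t : ℝ}

lemma shiftWeight_apply_left (huv : u ≠ v) : shiftWeight x u v t u = x u + t := by
  simp [shiftWeight, huv]

lemma shiftWeight_apply_right (huv : u ≠ v) : shiftWeight x u v t v = x v - t := by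
  simp [shiftWeight, huv.symm]

lemma shiftWeight_apply_of_ne {i : α} (hu : i ≠ u) (hv : i ≠ v) : shiftWeight x u v t i = x i := by
  simp [shiftWeight, hu, hv]

lemma prod_shiftWeight_of_notMem {s : Finset α} (hu : u ∉ s) (hv : v ∉ s) :
    ∏ i ∈ s, shiftWeight x u v t i = ∏ i ∈ s, x i :=
  prod_congr rfl fun _ hi => shiftWeight_apply_of_ne (ne_of_mem_of_not_mem hi hu)
    (ne_of_mem_of_not_mem hi hv)

lemma prod_shiftWeight (e : Finset α) (huv : u ≠ v) (t : ℝ) :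
    ∏ i ∈ e, shiftWeight x u v t i = ∏ i ∈ e, x i
      + t * ((if u ∈ e then ∏ i ∈ e.erase u, x i else 0)
        - (if v ∈ e then ∏ i ∈ e.erase v, x i else 0))
      - t ^ 2 * (if u ∈ e ∧ v ∈ e then ∏ i ∈ (e.erase u).erase v, x i else 0) := by
  by_cases hu : u ∈ e <;> by_cases hv : v ∈ e
  · have hv' : v ∈ e.erase u := mem_erase.2 ⟨huv.symm, hv⟩
    have hu' : u ∈ e.erase v := mem_erase.2 ⟨huv, hu⟩
    rw [← mul_prod_erase e _ hu, ← mul_prod_erase _ _ hv', ← mul_prod_erase e x hu,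
      ← mul_prod_erase _ x hv', ← mul_prod_erase (e.erase v) x hu', erase_right_comm,
      prod_shiftWeight_of_notMem (by simp) (by simp), shiftWeight_apply_left huv,
      shiftWeight_apply_right huv]
    simp only [hu, hv, and_self, if_true]
    ring
  · rw [← mul_prod_erase e _ hu, ← mul_prod_erase e x hu,
      prod_shiftWeight_of_notMem (by simp) (fun h => hv (mem_of_mem_erase h)),
      shiftWeight_apply_left huv]
    simp only [hu, hv, and_false, if_true, if_false]
    ring
  · rw [← mul_prod_erase e _ hv, ← mul_prod_erase e x hv,
      prod_shiftWeight_of_notMem (fun h => hu (mem_of_mem_erase h)) (by simp),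
      shiftWeight_apply_right huv]
    simp only [hu, hv, false_and, if_true, if_false]
    ring
  · rw [prod_shiftWeight_of_notMem hu hv]
    simp only [hu, hv, and_false, if_false]
    ring

theorem lagrangePoly_shiftWeight (huv : u ≠ v) (t : ℝ) :
    lagrangePoly E (shiftWeight x u v t) = lagrangePoly E x
      + t * (lagrangePartial E x u - lagrangePartial E x v) - t ^ 2 * lagrangePartial₂ E x u v := by
  simp only [lagrangePoly, lagrangePartial, lagrangePartial₂, sum_filter, prod_shiftWeight _ huv,
    ← sum_sub_distrib, mul_sum, ← sum_add_distrib]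

lemma lagrangePartial₂_eq_zero (h : ∀ e ∈ E, ¬ (u ∈ e ∧ v ∈ e)) : lagrangePartial₂ E x u v = 0 :=
  sum_eq_zero fun e he => absurd (mem_filter.1 he).2 (h e (mem_filter.1 he).1)

lemma lagrangePartial_const {r : ℕ} (hE : ∀ e ∈ E, #e = r) (c : ℝ) (v : α) :
    lagrangePartial E (fun _ => c) v = #{e ∈ E | v ∈ e} * c ^ (r - 1) := by
  rw [lagrangePartial, sum_congr rfl fun e he => by
    rw [prod_const, card_erase_of_mem (mem_filter.1 he).2, hE e (mem_filter.1 he).1]]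
  simp

theorem sum_mul_lagrangePartial [Fintype α] {r : ℕ} (hE : ∀ e ∈ E, #e = r) (x : α → ℝ) :
    ∑ v, x v * lagrangePartial E x v = r * lagrangePoly E x := by
  simp only [lagrangePartial, lagrangePoly, sum_filter, mul_sum, mul_ite, mul_zero]
  rw [sum_comm]
  refine sum_congr rfl fun e he => ?_
  rw [← sum_filter, sum_congr rfl fun v hv => mul_prod_erase e x (mem_filter.1 hv).2]
  simp [hE e he]

lemma sum_mul_sum_erase_eq_two_mul {e : Finset α} (he : #e = 3) (y : α → ℝ) :
    ∑ v ∈ e, y v * ∑ w ∈ e.erase v, y w = 2 * ∑ v ∈ e, ∏ w ∈ e.erase v, y w := by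
  obtain ⟨a, b, c, hab, hac, hbc, rfl⟩ := card_eq_three.1 he
  simp [hab, hac, hbc, erase_insert_eq_erase, erase_insert_of_ne]
  ring

lemma sum_sum_filter_mem_subset (S : Finset α) (F : α → Finset α → ℝ) :
    ∑ v ∈ S, ∑ e ∈ E with v ∈ e ∧ e ⊆ S, F v e = ∑ e ∈ E with e ⊆ S, ∑ v ∈ e, F v e :=
  sum_comm' fun v e => by
    simp only [mem_filter]
    exact ⟨fun h => ⟨h.2.2.1, h.2.1, h.2.2.2⟩, fun h => ⟨h.2.2 h.1, h.2.1, h.1, h.2.2⟩⟩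

lemma lagrangePartial_eq_sum_filter_subset {S : Finset α} (hS : ∀ i ∉ S, x i = 0) {v : α}
    (hv : v ∈ S) : lagrangePartial E x v = ∑ e ∈ E with v ∈ e ∧ e ⊆ S, ∏ i ∈ e.erase v, x i := by
  rw [lagrangePartial, ← filter_filter]
  refine (sum_filter_of_ne fun e _ hprod i hi => ?_).symm
  by_contra hiS
  exact hprod (prod_eq_zero (mem_erase.2 ⟨by rintro rfl; exact hiS hv, hi⟩) (hS i hiS))

lemma sum_lagrangePartial_eq_sum_filter_subset {S : Finset α} (hS : ∀ i ∉ S, x i = 0) :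
    ∑ v ∈ S, lagrangePartial E x v = ∑ e ∈ E with e ⊆ S, ∑ v ∈ e, ∏ i ∈ e.erase v, x i := by
  rw [sum_congr rfl fun v hv => lagrangePartial_eq_sum_filter_subset hS hv,
    sum_sum_filter_mem_subset]

lemma shiftWeight_mem_stdSimplex [Fintype α] (hx : x ∈ stdSimplex ℝ α) (huv : u ≠ v)
    (ht : t ∈ Set.Icc (-x u) (x v)) : shiftWeight x u v t ∈ stdSimplex ℝ α := by
  refine ⟨fun i => ?_, ?_⟩
  · by_cases hiu : i = u
    · subst hiu; rw [shiftWeight_apply_left huv]; linarith [ht.1]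
    by_cases hiv : i = v
    · subst hiv; rw [shiftWeight_apply_right huv]; linarith [ht.2]
    rw [shiftWeight_apply_of_ne hiu hiv]; exact hx.1 i
  · simp [shiftWeight, sum_add_distrib, sum_sub_distrib, hx.2]

theorem lagrangePartial_eq_of_isMaxOn [Fintype α] (hx : x ∈ stdSimplex ℝ α)
    (hmax : IsMaxOn (lagrangePoly E) (stdSimplex ℝ α) x) (huv : u ≠ v) (hu : 0 < x u)
    (hv : 0 < x v) : lagrangePartial E x u = lagrangePartial E x v := by
  set γ := lagrangePartial E x u - lagrangePartial E x v
  set f : ℝ → ℝ := fun t => lagrangePoly E (shiftWeight x u v t)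
  have hf : f = fun t => lagrangePoly E x + t * γ - t ^ 2 * lagrangePartial₂ E x u v :=
    funext (lagrangePoly_shiftWeight huv)
  have hlocal : IsLocalMax f 0 := by
    filter_upwards [Icc_mem_nhds (neg_lt_zero.2 hu) hv] with t ht
    rw [show f 0 = lagrangePoly E x by simp [hf]]
    exact hmax (shiftWeight_mem_stdSimplex hx huv ht)
  have hderiv : HasDerivAt f γ 0 := by
    rw [hf]
    simpa using (((hasDerivAt_id (0 : ℝ)).mul_const γ).const_add (lagrangePoly E x)).fun_sub
      ((hasDerivAt_pow 2 (0 : ℝ)).mul_const (lagrangePartial₂ E x u v))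
  exact sub_eq_zero.1 (hlocal.hasDerivAt_eq_zero hderiv)

theorem lagrangePartial_eq_mul_of_isMaxOn [Fintype α] {r : ℕ} (hE : ∀ e ∈ E, #e = r)
    (hx : x ∈ stdSimplex ℝ α) (hmax : IsMaxOn (lagrangePoly E) (stdSimplex ℝ α) x) {v : α}
    (hv : 0 < x v) : lagrangePartial E x v = r * lagrangePoly E x := by
  have hconst : ∀ w, x w * lagrangePartial E x w = x w * lagrangePartial E x v := by
    intro w
    rcases (hx.1 w).eq_or_lt with hw | hw
    · rw [← hw, zero_mul, zero_mul]
    rcases eq_or_ne w v with rfl | hwv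
    · rfl
    · rw [lagrangePartial_eq_of_isMaxOn hx hmax hwv hw hv]
  rw [← sum_mul_lagrangePartial hE, sum_congr rfl fun w _ => hconst w, ← sum_mul, hx.2, one_mul]

theorem exists_isMaxOn_lagrangePoly_covering [Fintype α] [Nonempty α] (E : Finset (Finset α)) :
    ∃ y ∈ stdSimplex ℝ α, IsMaxOn (lagrangePoly E) (stdSimplex ℝ α) y ∧
      ∀ u v, u ≠ v → 0 < y u → 0 < y v → ∃ e ∈ E, u ∈ e ∧ v ∈ e ∧ ∀ i ∈ e, 0 < y i := by
  set M := {y | y ∈ stdSimplex ℝ α ∧ IsMaxOn (lagrangePoly E) (stdSimplex ℝ α) y}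
  have hM : M.Nonempty := by
    have hcont : Continuous (lagrangePoly E) := by unfold lagrangePoly; fun_prop
    obtain ⟨y, hy, hmax⟩ := (isCompact_stdSimplex ℝ α).exists_isMaxOn
      (Set.nonempty_coe_sort.1 inferInstance) hcont.continuousOn
    exact ⟨y, hy, hmax⟩
  -- a maximiser with the fewest positive coordinates; an uncovered pair would let us lower that
  -- number by moving all the weight of `v` onto `u`
  obtain ⟨y, ⟨hy, hmax⟩, hmin⟩ := (measure fun y : α → ℝ => #{i | 0 < y i}).wf.has_min M hM
  refine ⟨y, hy, hmax, fun u v huv hu hv => ?_⟩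
  by_contra! hno
  have hW : lagrangePartial₂ E y u v = 0 := sum_eq_zero fun e he => by
    obtain ⟨heE, hue, hve⟩ := mem_filter.1 he
    obtain ⟨i, hi, hyi⟩ := hno e heE hue hve
    exact prod_eq_zero (mem_erase.2 ⟨ne_of_apply_ne y (hyi.trans_lt hv).ne,
      mem_erase.2 ⟨ne_of_apply_ne y (hyi.trans_lt hu).ne, hi⟩⟩)
      (le_antisymm hyi (hy.1 i))
  have hpz : lagrangePoly E (shiftWeight y u v (y v)) = lagrangePoly E y := by
    rw [lagrangePoly_shiftWeight huv, lagrangePartial_eq_of_isMaxOn hy hmax huv hu hv, hW]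
    ring
  have hsupp :
      ({i | 0 < shiftWeight y u v (y v) i} : Finset α) ⊆ ({i | 0 < y i} : Finset α).erase v := by
    intro i hi
    simp only [mem_filter, mem_univ, true_and, mem_erase] at hi ⊢
    by_cases hiu : i = u
    · subst hiu; exact ⟨huv, hu⟩
    by_cases hiv : i = v
    · subst hiv; rw [shiftWeight_apply_right huv, sub_self] at hi; exact absurd hi (lt_irrefl 0)
    · exact ⟨hiv, by rwa [shiftWeight_apply_of_ne hiu hiv] at hi⟩
  refine hmin _ ⟨shiftWeight_mem_stdSimplex hy huv ⟨by linarith, le_rfl⟩,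
    fun w hw => hpz ▸ hmax hw⟩ ?_
  exact (card_le_card hsupp).trans_lt (card_erase_lt_of_mem (by simpa using hv))

end Lagrangian

section Bound

variable {n : ℕ} {E : Finset (Finset (Fin n))}

def codegree (E : Finset (Finset (Fin n))) (u v : Fin n) : ℕ := #{e ∈ E | u ∈ e ∧ v ∈ e}

def commonNbrs (E : Finset (Finset (Fin n))) (u v : Fin n) : Finset (Fin n) := {z | {u, v, z} ∈ E}

lemma mem_commonNbrs {u v z : Fin n} : z ∈ commonNbrs E u v ↔ {u, v, z} ∈ E := by
  simp [commonNbrs]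

lemma IsThreeGraph.ne_of_mem (hE : IsThreeGraph E) {a b c : Fin n} (h : {a, b, c} ∈ E) :
    a ≠ b ∧ a ≠ c ∧ b ≠ c := by
  have h3 := hE _ h
  refine ⟨?_, ?_, ?_⟩ <;> rintro rfl <;> simp at h3 <;> grind [card_le_two]

lemma IsThreeGraph.exists_eq_insert (hE : IsThreeGraph E) {e : Finset (Fin n)} (he : e ∈ E)
    {u w : Fin n} (hu : u ∈ e) (hw : w ∈ e) (huw : u ≠ w) : ∃ z, e = {u, w, z} := by
  have hw' : w ∈ e.erase u := mem_erase.2 ⟨huw.symm, hw⟩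
  obtain ⟨z, hz⟩ := card_eq_one.1 (by
    rw [card_erase_of_mem hw', card_erase_of_mem hu, hE e he] : #((e.erase u).erase w) = 1)
  exact ⟨z, by rw [← hz, insert_erase hw', insert_erase hu]⟩

lemma IsThreeGraph.card_commonNbrs (hE : IsThreeGraph E) {u w : Fin n} (huw : u ≠ w) :
    #(commonNbrs E u w) = codegree E u w := by
  refine card_nbij (fun z => {u, w, z}) (fun z hz => ?_) (fun z hz z' hz' h => ?_) (fun e he => ?_)
  · simpa [codegree] using mem_commonNbrs.1 (mem_coe.1 hz)
  · obtain ⟨-, hzu, hzw⟩ := hE.ne_of_mem (mem_commonNbrs.1 (mem_coe.1 hz))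
    have : z ∈ ({u, w, z'} : Finset (Fin n)) := by simp only at h; rw [← h]; simp
    simpa [hzu.symm, hzw.symm] using this
  · obtain ⟨heE, hu, hw⟩ := mem_filter.1 (mem_coe.1 he)
    obtain ⟨z, rfl⟩ := hE.exists_eq_insert heE hu hw huw
    exact ⟨z, mem_coe.2 (mem_commonNbrs.2 heE), rfl⟩

theorem Cancellative.not_adjacent_of_mem_commonNbrs (hC : Cancellative E) (hE : IsThreeGraph E)
    {u w z z' : Fin n} (hz : z ∈ commonNbrs E u w) (hz' : z' ∈ commonNbrs E u w) :
    ¬ Adjacent E z z' := by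
  rintro ⟨hzz', A, hA, hzA, hz'A⟩
  rw [mem_commonNbrs] at hz hz'
  obtain ⟨-, huz, hwz⟩ := hE.ne_of_mem hz
  obtain ⟨-, huz', hwz'⟩ := hE.ne_of_mem hz'
  have hz'B : z' ∉ ({u, w, z} : Finset (Fin n)) := by simp [huz'.symm, hwz'.symm, hzz'.symm]
  have hzC : z ∉ ({u, w, z'} : Finset (Fin n)) := by simp [huz.symm, hwz.symm, hzz']
  refine hC A hA _ hz _ hz' (by rintro rfl; exact hz'B hz'A) (by rintro rfl; exact hzC hzA)
    (by rintro h; exact hz'B (h ▸ by simp)) fun i hi => ?_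
  rcases mem_symmDiff.1 hi with ⟨hi, hi'⟩ | ⟨hi, hi'⟩ <;> simp at hi hi' <;> grind

theorem Cancellative.sum_erase_eq_sum_edges (hC : Cancellative E) (hE : IsThreeGraph E)
    {S : Finset (Fin n)} (hcov : ∀ u ∈ S, ∀ v ∈ S, u ≠ v → ∃ e ∈ E, u ∈ e ∧ v ∈ e ∧ e ⊆ S)
    {v : Fin n} (hv : v ∈ S) (f : Fin n → ℝ) :
    ∑ w ∈ S.erase v, f w = ∑ e ∈ E with v ∈ e ∧ e ⊆ S, ∑ w ∈ e.erase v, f w := by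
  have hpart : S.erase v = {e ∈ E | v ∈ e ∧ e ⊆ S}.biUnion (·.erase v) := by
    ext w
    simp only [mem_erase, mem_biUnion, mem_filter]
    constructor
    · rintro ⟨hwv, hw⟩
      obtain ⟨e, he, hve, hwe, heS⟩ := hcov v hv w hw (Ne.symm hwv)
      exact ⟨e, ⟨he, hve, heS⟩, hwv, hwe⟩
    · rintro ⟨e, ⟨-, -, heS⟩, hwv, hwe⟩
      exact ⟨hwv, heS hwe⟩
  rw [hpart, sum_biUnion]
  intro e₁ he₁ e₂ he₂ hne
  simp only [coe_filter, Set.mem_ofPred_eq] at he₁ he₂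
  refine disjoint_left.2 fun w hw₁ hw₂ => hne ?_
  obtain ⟨hwv, hw₁⟩ := mem_erase.1 hw₁
  obtain ⟨z₁, rfl⟩ := hE.exists_eq_insert he₁.1 he₁.2.1 hw₁ (Ne.symm hwv)
  obtain ⟨z₂, rfl⟩ := hE.exists_eq_insert he₂.1 he₂.2.1 (mem_erase.1 hw₂).2 (Ne.symm hwv)
  by_contra hz
  have hz₁₂ : z₁ ≠ z₂ := fun h => hz (h ▸ rfl)
  obtain ⟨A, hA, hz₁A, hz₂A, -⟩ := hcov z₁ (he₁.2.2 (by simp)) z₂ (he₂.2.2 (by simp)) hz₁₂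
  exact hC.not_adjacent_of_mem_commonNbrs hE (mem_commonNbrs.2 he₁.1) (mem_commonNbrs.2 he₂.1)
    ⟨hz₁₂, A, hA, hz₁A, hz₂A⟩

theorem Cancellative.sq_sum_sub_sum_sq_eq (hC : Cancellative E) (hE : IsThreeGraph E)
    {S : Finset (Fin n)} (hcov : ∀ u ∈ S, ∀ v ∈ S, u ≠ v → ∃ e ∈ E, u ∈ e ∧ v ∈ e ∧ e ⊆ S)
    (y : Fin n → ℝ) :
    (∑ v ∈ S, y v) ^ 2 - ∑ v ∈ S, y v ^ 2 =
      2 * ∑ e ∈ E with e ⊆ S, ∑ v ∈ e, ∏ w ∈ e.erase v, y w := calc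
  _ = ∑ v ∈ S, y v * ∑ w ∈ S.erase v, y w := by
    rw [sq, sum_mul, ← sum_sub_distrib]
    exact sum_congr rfl fun v hv => by rw [sum_erase_eq_sub hv]; ring
  _ = ∑ v ∈ S, ∑ e ∈ E with v ∈ e ∧ e ⊆ S, y v * ∑ w ∈ e.erase v, y w :=
    sum_congr rfl fun v hv => by rw [hC.sum_erase_eq_sum_edges hE hcov hv, mul_sum]
  _ = ∑ e ∈ E with e ⊆ S, ∑ v ∈ e, y v * ∑ w ∈ e.erase v, y w := sum_sum_filter_mem_subset S _
  _ = _ := by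
    rw [mul_sum]
    exact sum_congr rfl fun e he => sum_mul_sum_erase_eq_two_mul (hE e (mem_filter.1 he).1) y

theorem lagrangePoly_le_of_covering (hE : IsThreeGraph E) (hC : Cancellative E)
    {y : Fin n → ℝ} (hy : y ∈ stdSimplex ℝ (Fin n))
    (hmax : IsMaxOn (lagrangePoly E) (stdSimplex ℝ (Fin n)) y)
    (hcov : ∀ u v, u ≠ v → 0 < y u → 0 < y v → ∃ e ∈ E, u ∈ e ∧ v ∈ e ∧ ∀ i ∈ e, 0 < y i) :
    lagrangePoly E y ≤ 1 / 27 := by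
  set S : Finset (Fin n) := {i | 0 < y i}
  have hmemS {i} : i ∈ S ↔ 0 < y i := by simp [S]
  have hyS : ∀ i ∉ S, y i = 0 := fun i hi => le_antisymm (not_lt.1 (hmemS.not.1 hi)) (hy.1 i)
  have hsumS : ∑ v ∈ S, y v = 1 := by
    rw [← hy.2, sum_subset (subset_univ S) fun i _ hi => hyS i hi]
  have hcovS : ∀ u ∈ S, ∀ v ∈ S, u ≠ v → ∃ e ∈ E, u ∈ e ∧ v ∈ e ∧ e ⊆ S := by
    intro u hu v hv huv
    obtain ⟨e, he, hue, hve, hpos⟩ := hcov u v huv (hmemS.1 hu) (hmemS.1 hv)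
    exact ⟨e, he, hue, hve, fun i hi => hmemS.2 (hpos i hi)⟩
  have key : 1 - ∑ v ∈ S, y v ^ 2 = 6 * #S * lagrangePoly E y := by
    have hpartial : ∀ v ∈ S, lagrangePartial E y v = 3 * lagrangePoly E y := fun v hv => by
      exact_mod_cast lagrangePartial_eq_mul_of_isMaxOn hE hy hmax (hmemS.1 hv)
    rw [← one_pow 2, ← hsumS, hC.sq_sum_sub_sum_sq_eq hE hcovS,
      ← sum_lagrangePartial_eq_sum_filter_subset hyS, sum_congr rfl hpartial, sum_const,
      nsmul_eq_mul]
    ring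
  rcases le_or_gt (lagrangePoly E y) 0 with hp | hp
  · linarith
  have hS : (3 : ℝ) ≤ #S := by
    obtain ⟨e, he, hprod⟩ := exists_ne_zero_of_sum_ne_zero hp.ne'
    exact_mod_cast (hE e he).symm.le.trans (card_le_card fun i hi =>
      hmemS.2 ((hy.1 i).lt_of_ne fun h => hprod (prod_eq_zero hi h.symm)))
  have hQ : 1 ≤ #S * ∑ v ∈ S, y v ^ 2 := by
    simpa [hsumS] using sq_sum_le_card_mul_sum_sq (s := S) (f := y)
  nlinarith [mul_nonneg (by linarith : (0 : ℝ) ≤ 2 * #S - 3) (by linarith : (0 : ℝ) ≤ #S - 3)]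

lemma uniform_mem_stdSimplex (hn : 0 < n) : (fun _ => (n : ℝ)⁻¹) ∈ stdSimplex ℝ (Fin n) :=
  ⟨fun _ => by positivity, by simp [hn.ne']⟩

theorem lagrangePoly_le_of_cancellative (hE : IsThreeGraph E) (hC : Cancellative E)
    {x : Fin n → ℝ} (hx : x ∈ stdSimplex ℝ (Fin n)) : lagrangePoly E x ≤ 1 / 27 := by
  have : Nonempty (Fin n) :=
    univ_nonempty_iff.1 (nonempty_of_sum_ne_zero (hx.2 ▸ one_ne_zero))
  obtain ⟨y, hy, hmax, hcov⟩ := exists_isMaxOn_lagrangePoly_covering E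
  exact (hmax hx).trans (lagrangePoly_le_of_covering hE hC hy hmax hcov)

theorem Cancellative.card_le (hE : IsThreeGraph E) (hC : Cancellative E) : 27 * #E ≤ n ^ 3 := by
  rcases Nat.eq_zero_or_pos n with rfl | hn
  · have : E = ∅ := eq_empty_of_forall_notMem fun e he => by simpa [hE e he] using card_le_univ e
    simp [this]
  have h := lagrangePoly_le_of_cancellative hE hC (uniform_mem_stdSimplex hn)
  rw [lagrangePoly_const hE, inv_pow, ← div_eq_mul_inv, div_le_iff₀ (by positivity)] at h
  exact_mod_cast (by linarith : (27 * #E : ℝ) ≤ n ^ 3)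

end Bound

section Tripartite

lemma fin_three_cases (j : Fin 3) : j = 0 ∨ j = 1 ∨ j = 2 := by
  fin_cases j <;> simp

variable {α : Type*} [Fintype α]

def tripartite (P : α → Fin 3) : Finset (Finset α) :=
  univ.filter fun e => ∀ j : Fin 3, (e.filter fun i => P i = j).card = 1

lemma T3_eq_tripartite (n : ℕ) : T3 n = tripartite (part3 n) := rfl

lemma mem_tripartite {P : α → Fin 3} {e : Finset α} :
    e ∈ tripartite P ↔ ∀ j : Fin 3, #{i ∈ e | P i = j} = 1 := by
  simp [tripartite]

lemma mem_tripartite_of_injOn {P : α → Fin 3} {e : Finset α} (he : #e = 3)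
    (hP : Set.InjOn P e) : e ∈ tripartite P := by
  have hle : ∀ j, #{i ∈ e | P i = j} ≤ 1 := fun j => card_le_one.2 fun a ha b hb =>
    hP (mem_filter.1 ha).1 (mem_filter.1 hb).1 ((mem_filter.1 ha).2.trans (mem_filter.1 hb).2.symm)
  have hsum := card_eq_sum_card_fiberwise (s := e) (t := univ) (f := P) fun _ _ => mem_univ _
  rw [he, Fin.sum_univ_three] at hsum
  rw [mem_tripartite]
  intro j
  have := hle 0; have := hle 1; have := hle 2
  rcases fin_three_cases j with rfl | rfl | rfl <;> omega

variable [DecidableEq α]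

lemma insert_mem_tripartite {P : α → Fin 3} {a b c : α} (ha : P a = 0) (hb : P b = 1)
    (hc : P c = 2) : {a, b, c} ∈ tripartite P := by
  rw [mem_tripartite]
  intro j
  fin_cases j <;> simp [filter_insert, filter_singleton, ha, hb, hc]

lemma exists_eq_insert_of_mem_tripartite {P : α → Fin 3} {e : Finset α}
    (he : e ∈ tripartite P) : ∃ a b c, P a = 0 ∧ P b = 1 ∧ P c = 2 ∧ e = {a, b, c} := by
  rw [mem_tripartite] at he
  obtain ⟨a, ha⟩ := card_eq_one.1 (he 0)
  obtain ⟨b, hb⟩ := card_eq_one.1 (he 1)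
  obtain ⟨c, hc⟩ := card_eq_one.1 (he 2)
  have hmem : ∀ {i j}, i ∈ e → P i = j → i ∈ {i ∈ e | P i = j} := fun hi hj => mem_filter.2 ⟨hi, hj⟩
  have ha' := mem_filter.1 (ha ▸ mem_singleton_self a)
  have hb' := mem_filter.1 (hb ▸ mem_singleton_self b)
  have hc' := mem_filter.1 (hc ▸ mem_singleton_self c)
  refine ⟨a, b, c, ha'.2, hb'.2, hc'.2, Subset.antisymm (fun i hi => ?_) ?_⟩
  · rcases fin_three_cases (P i) with h | h | h
    · simp [← mem_singleton.1 (ha ▸ hmem hi h)]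
    · simp [← mem_singleton.1 (hb ▸ hmem hi h)]
    · simp [← mem_singleton.1 (hc ▸ hmem hi h)]
  · simp [insert_subset_iff, ha'.1, hb'.1, hc'.1]

theorem card_tripartite (P : α → Fin 3) :
    #(tripartite P) = #{i | P i = 0} * #{i | P i = 1} * #{i | P i = 2} := by
  rw [← card_product, ← card_product]
  refine (card_nbij (fun t => {t.1.1, t.1.2, t.2}) ?_ ?_ ?_).symm
  · rintro ⟨⟨a, b⟩, c⟩ h
    simp only [coe_product, Set.mem_prod, coe_filter, mem_univ, true_and] at h
    exact insert_mem_tripartite h.1.1 h.1.2 h.2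
  · rintro ⟨⟨a, b⟩, c⟩ h ⟨⟨a', b'⟩, c'⟩ h' heq
    simp only [coe_product, Set.mem_prod, coe_filter, mem_univ, true_and] at h h'
    simp only [Finset.ext_iff, mem_insert, mem_singleton] at heq
    have := heq a; have := heq b; have := heq c
    grind
  · intro e he
    obtain ⟨a, b, c, ha, hb, hc, rfl⟩ := exists_eq_insert_of_mem_tripartite he
    exact ⟨((a, b), c), by simp [ha, hb, hc], rfl⟩

end Tripartite

section CountingT3

variable {n : ℕ}

lemma IsoTo.card_eq {E₁ E₂ : Finset (Finset (Fin n))} (h : IsoTo E₁ E₂) : #E₁ = #E₂ := by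
  obtain ⟨σ, hσ⟩ := h
  exact card_equiv σ.finsetCongr (by simpa using hσ)

lemma isoTo_tripartite {P Q : Fin n → Fin 3} (h : ∀ j, #{i | P i = j} = #{i | Q i = j}) :
    IsoTo (tripartite P) (tripartite Q) := by
  let σ : Fin n ≃ Fin n := Equiv.ofFiberEquiv (f := P) (g := Q) fun j =>
    Fintype.equivOfCardEq (by rw [Fintype.card_subtype, Fintype.card_subtype, h j])
  have hσ : ∀ i, Q (σ i) = P i := Equiv.ofFiberEquiv_map _
  refine ⟨σ, fun e => ?_⟩
  simp [mem_tripartite, filter_map, hσ]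

lemma card_filter_fin_val (n : ℕ) (p : ℕ → Prop) [DecidablePred p] :
    #{i : Fin n | p i} = #{m ∈ range n | p m} := by
  rw [← card_map Fin.valEmbedding]
  congr 1
  ext m
  simp only [mem_map, mem_filter, mem_univ, true_and, Fin.valEmbedding_apply, mem_range]
  exact ⟨fun ⟨i, hi, him⟩ => him ▸ ⟨i.isLt, hi⟩, fun ⟨hm, hp⟩ => ⟨⟨m, hm⟩, hp, rfl⟩⟩

lemma card_part3 (n : ℕ) : #{i | part3 n i = 0} = n / 3 ∧ #{i | part3 n i = 1} = (n + 1) / 3 ∧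
    #{i | part3 n i = 2} = (n + 2) / 3 := by
  let q : ℕ → Fin 3 := fun m => if m < n / 3 then 0 else if m < n / 3 + (n + 1) / 3 then 1 else 2
  have key (j : Fin 3) : #{i | part3 n i = j} = #{m ∈ range n | q m = j} :=
    card_filter_fin_val n (q · = j)
  refine ⟨?_, ?_, ?_⟩
  · rw [key, show {m ∈ range n | _} = range (n / 3) by
      ext m; simp [q]; split_ifs <;> simp <;> omega]
    simp
  · rw [key, show {m ∈ range n | _} = Ico (n / 3) (n / 3 + (n + 1) / 3) by
      ext m; simp [q]; split_ifs <;> simp <;> omega]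
    simp
  · rw [key, show {m ∈ range n | _} = Ico (n / 3 + (n + 1) / 3) n by
      ext m; simp [q]; split_ifs <;> simp <;> omega]
    simp; omega

theorem card_T3 (n : ℕ) : #(T3 n) = t3 n := by
  obtain ⟨h0, h1, h2⟩ := card_part3 n
  rw [T3_eq_tripartite, card_tripartite, h0, h1, h2, t3]

end CountingT3

section Links

variable {n : ℕ} {E : Finset (Finset (Fin n))} {u v w : Fin n}

lemma Adjacent.symm (h : Adjacent E u v) : Adjacent E v u :=
  ⟨h.1.symm, h.2.imp fun _ ⟨he, hu, hv⟩ => ⟨he, hv, hu⟩⟩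

instance (E : Finset (Finset (Fin n))) : DecidableRel (Adjacent E) := fun u v =>
  inferInstanceAs (Decidable (u ≠ v ∧ ∃ e ∈ E, u ∈ e ∧ v ∈ e))

lemma adjacent_iff_codegree_ne_zero : Adjacent E u v ↔ u ≠ v ∧ codegree E u v ≠ 0 := by
  simp [Adjacent, codegree]

lemma injOn_erase_link (E : Finset (Finset (Fin n))) (v : Fin n) :
    Set.InjOn (fun e : Finset (Fin n) => e.erase v) ({e ∈ E | v ∈ e} : Finset _) :=
  fun e he e' he' h => by
    rw [← insert_erase (mem_filter.1 he).2, ← insert_erase (mem_filter.1 he').2]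
    exact congrArg (insert v) h

lemma degree_eq_card_filter (E : Finset (Finset (Fin n))) (v : Fin n) :
    degree E v = #{e ∈ E | v ∈ e} :=
  card_image_of_injOn (injOn_erase_link E v)

lemma codegree_self (u : Fin n) : codegree E u u = degree E u := by
  simp [codegree, degree_eq_card_filter]

lemma sum_codegree (hE : IsThreeGraph E) (u : Fin n) : ∑ w, codegree E u w = 3 * degree E u := by
  simp only [codegree, card_filter]
  rw [sum_comm, degree_eq_card_filter, card_filter, mul_sum]
  refine sum_congr rfl fun e he => ?_
  by_cases hu : u ∈ e <;> simp [hu, hE e he]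

lemma exists_adjacent_of_degree_pos (hE : IsThreeGraph E) (h : 0 < degree E v) :
    ∃ w, Adjacent E v w := by
  rw [degree_eq_card_filter] at h
  obtain ⟨e, he⟩ := card_pos.1 h
  obtain ⟨he, hve⟩ := mem_filter.1 he
  obtain ⟨w, hwe, hwv⟩ := exists_mem_ne (by rw [hE e he]; norm_num) v
  exact ⟨w, hwv.symm, e, he, hve, hwe⟩

lemma IsThreeGraph.card_of_mem_link (hE : IsThreeGraph E) (v : Fin n) :
    ∀ f ∈ link E v, #f = 2 := by
  simp only [link, mem_image, mem_filter]
  rintro _ ⟨e, ⟨he, hve⟩, rfl⟩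
  rw [card_erase_of_mem hve, hE e he]

lemma lagrangePartial_eq_lagrangePoly_link (x : Fin n → ℝ) (v : Fin n) :
    lagrangePartial E x v = lagrangePoly (link E v) x := by
  rw [lagrangePoly, link, sum_image (injOn_erase_link E v), lagrangePartial]

lemma card_filter_link (hvu : v ≠ u) : #{f ∈ link E v | u ∈ f} = codegree E v u := by
  rw [link, filter_image,
    card_image_of_injOn ((injOn_erase_link E v).mono (coe_subset.2 (filter_subset _ _))),
    filter_filter, codegree]
  simp [hvu.symm]

lemma lagrangePartial_shiftWeight_const (hE : IsThreeGraph E) (huv : u ≠ v)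
    (hadj : ¬ Adjacent E u v) {a : Fin n} (hau : a ≠ u) (hav : a ≠ v) (c : ℝ) :
    lagrangePartial E (shiftWeight (fun _ => c) u v c) a =
      (degree E a + codegree E a u - codegree E a v) * c ^ 2 := by
  have h₂ : lagrangePartial₂ (link E a) (fun _ => c) u v = 0 := by
    refine lagrangePartial₂_eq_zero fun f hf huf => ?_
    simp only [link, mem_filter, mem_image] at hf
    obtain ⟨e, ⟨he, -⟩, rfl⟩ := hf
    exact hadj ⟨huv, e, he, mem_of_mem_erase huf.1, mem_of_mem_erase huf.2⟩
  rw [lagrangePartial_eq_lagrangePoly_link, lagrangePoly_shiftWeight huv, h₂,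
    lagrangePoly_const (hE.card_of_mem_link a), lagrangePartial_const (hE.card_of_mem_link a),
    lagrangePartial_const (hE.card_of_mem_link a), card_filter_link hau, card_filter_link hav]
  simp only [degree]
  ring

end Links

section NonAdjClass

variable {n : ℕ} {E : Finset (Finset (Fin n))} {u v w z : Fin n}

def nonAdjClass (E : Finset (Finset (Fin n))) (v : Fin n) : Finset (Fin n) :=
  {w | ¬ Adjacent E v w}

lemma mem_nonAdjClass : w ∈ nonAdjClass E v ↔ ¬ Adjacent E v w := by
  simp [nonAdjClass]

lemma mem_nonAdjClass_self (v : Fin n) : v ∈ nonAdjClass E v :=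
  mem_nonAdjClass.2 fun h => h.1 rfl

lemma sum_codegree_compl_nonAdjClass (hE : IsThreeGraph E) (u : Fin n) :
    ∑ w ∈ (nonAdjClass E u)ᶜ, codegree E u w = 2 * degree E u := by
  have hcls : ∑ w ∈ nonAdjClass E u, codegree E u w = degree E u := by
    rw [← sum_erase_add _ _ (mem_nonAdjClass_self u), codegree_self, sum_eq_zero, zero_add]
    intro w hw
    obtain ⟨hwu, hw⟩ := mem_erase.1 hw
    by_contra h
    exact mem_nonAdjClass.1 hw (adjacent_iff_codegree_ne_zero.2 ⟨Ne.symm hwu, h⟩)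
  have := sum_codegree hE u
  rw [← sum_compl_add_sum (nonAdjClass E u), hcls] at this
  omega

lemma two_mul_degree_le (hE : IsThreeGraph E) {D D' : Finset (Fin n)}
    (hD : (nonAdjClass E u)ᶜ ⊆ D ∪ D') {b c : ℕ} (hb : ∀ w ∈ D, codegree E u w ≤ b)
    (hc : ∀ w ∈ D', codegree E u w ≤ c) : 2 * degree E u ≤ #D * b + #D' * c := by
  rw [← sum_codegree_compl_nonAdjClass hE]
  calc ∑ w ∈ (nonAdjClass E u)ᶜ, codegree E u w ≤ ∑ w ∈ D ∪ D', codegree E u w :=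
        sum_le_sum_of_subset hD
    _ ≤ ∑ w ∈ D, codegree E u w + ∑ w ∈ D', codegree E u w := by
        rw [← sum_union_inter]; exact Nat.le_add_right _ _
    _ ≤ #D * b + #D' * c := by
        rw [← smul_eq_mul, ← smul_eq_mul]
        exact add_le_add (sum_le_card_nsmul _ _ _ hb) (sum_le_card_nsmul _ _ _ hc)

theorem exists_commonNbrs_subset_nonAdjClass (hE : IsThreeGraph E) (hC : Cancellative E)
    (h : Adjacent E u w) :
    ∃ z, Adjacent E u z ∧ Adjacent E w z ∧ commonNbrs E u w ⊆ nonAdjClass E z := by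
  obtain ⟨huw, e, he, hu, hw⟩ := h
  obtain ⟨z, rfl⟩ := hE.exists_eq_insert he hu hw huw
  obtain ⟨-, huz, hwz⟩ := hE.ne_of_mem he
  refine ⟨z, ⟨huz, _, he, by simp⟩, ⟨hwz, _, he, by simp⟩, fun z' hz' => ?_⟩
  exact mem_nonAdjClass.2 (hC.not_adjacent_of_mem_commonNbrs hE (mem_commonNbrs.2 he) hz')

lemma codegree_le_of_forall_adjacent (hE : IsThreeGraph E) (hC : Cancellative E) (huw : u ≠ w)
    {m : ℕ} (h : ∀ z, Adjacent E u z → Adjacent E w z → #(nonAdjClass E z) ≤ m) :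
    codegree E u w ≤ m := by
  by_cases hadj : Adjacent E u w
  · obtain ⟨z, huz, hwz, hsub⟩ := exists_commonNbrs_subset_nonAdjClass hE hC hadj
    rw [← hE.card_commonNbrs huw]
    exact (card_le_card hsub).trans (h z huz hwz)
  · simp [adjacent_iff_codegree_ne_zero, huw] at hadj
    simp [hadj]

section Labelling

variable {k : ℕ} {P : Fin n → Fin 3}

lemma nonAdjClass_eq_filter (hP : ∀ i j, P i = P j ↔ ¬ Adjacent E i j) (i : Fin n) :
    nonAdjClass E i = ({j | P j = P i} : Finset (Fin n)) := by
  ext j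
  simp [mem_nonAdjClass, ← hP, eq_comm]

lemma codegree_eq_of_label_ne (hE : IsThreeGraph E) (hC : Cancellative E)
    (hdeg : ∀ v, degree E v = k ^ 2) (hP : ∀ i j, P i = P j ↔ ¬ Adjacent E i j)
    (hcard : ∀ j, #{i | P i = j} = k) {a b : Fin n} (hab : P a ≠ P b) : codegree E a b = k := by
  have hn : n = 3 * k := by
    simpa [Fin.sum_univ_three, hcard] using
      card_eq_sum_card_fiberwise (s := univ) (t := univ) (f := P) fun _ _ => mem_univ _
  have hsum : ∑ w ∈ (nonAdjClass E a)ᶜ, codegree E a w = ∑ w ∈ (nonAdjClass E a)ᶜ, k := by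
    rw [sum_codegree_compl_nonAdjClass hE, hdeg, sum_const, card_compl,
      nonAdjClass_eq_filter hP, hcard, Fintype.card_fin, hn, smul_eq_mul,
      show 3 * k - k = 2 * k by omega]
    ring
  refine (sum_eq_sum_iff_of_le fun w hw => ?_).1 hsum b
    (by simp [nonAdjClass_eq_filter hP, hab.symm])
  refine codegree_le_of_forall_adjacent hE hC ?_ fun z _ _ => by
    rw [nonAdjClass_eq_filter hP, hcard]
  rintro rfl
  simp [mem_nonAdjClass_self] at hw

lemma insert_mem_of_label (hE : IsThreeGraph E) (hC : Cancellative E)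
    (hdeg : ∀ v, degree E v = k ^ 2) (hP : ∀ i j, P i = P j ↔ ¬ Adjacent E i j)
    (hcard : ∀ j, #{i | P i = j} = k) {a b c : Fin n} (ha : P a = 0) (hb : P b = 1)
    (hc : P c = 2) : {a, b, c} ∈ E := by
  have hab := codegree_eq_of_label_ne hE hC hdeg hP hcard (a := a) (b := b) (by simp [ha, hb])
  have hk : 0 < k := hcard (P a) ▸ card_pos.2 ⟨a, by simp⟩
  have hadj : Adjacent E a b :=
    adjacent_iff_codegree_ne_zero.2 ⟨fun h => by simp [h, hb] at ha, by omega⟩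
  obtain ⟨z, haz, hbz, hsub⟩ := exists_commonNbrs_subset_nonAdjClass hE hC hadj
  have heq : commonNbrs E a b = nonAdjClass E z := eq_of_subset_of_card_le hsub
    (by rw [hE.card_commonNbrs hadj.1, hab, nonAdjClass_eq_filter hP, hcard])
  have hz : P z = 2 := by
    have h0 : P z ≠ 0 := fun h => (hP a z).1 (h ▸ ha) haz
    have h1 : P z ≠ 1 := fun h => (hP b z).1 (h ▸ hb) hbz
    rcases fin_three_cases (P z) with h | h | h <;> simp_all
  exact mem_commonNbrs.1 (heq ▸ by simp [nonAdjClass_eq_filter hP, hz, hc])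

theorem eq_tripartite_of_label_eq_iff (hE : IsThreeGraph E) (hC : Cancellative E)
    (hdeg : ∀ v, degree E v = k ^ 2) (hP : ∀ i j, P i = P j ↔ ¬ Adjacent E i j)
    (hcard : ∀ j, #{i | P i = j} = k) : E = tripartite P := by
  ext e
  constructor
  · intro he
    refine mem_tripartite_of_injOn (hE e he) fun i hi j hj hij => ?_
    by_contra hne
    exact (hP i j).1 hij ⟨hne, e, he, hi, hj⟩
  · intro he
    obtain ⟨a, b, c, ha, hb, hc, rfl⟩ := exists_eq_insert_of_mem_tripartite he
    exact insert_mem_of_label hE hC hdeg hP hcard ha hb hc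

end Labelling

end NonAdjClass

lemma eq_of_two_mul_sq_le_mul {k a b c r : ℕ} (hsum : a + b + r = 3 * k) (hba : b ≤ a)
    (hcb : c ≤ b) (hcr : c ≤ r) (h : 2 * k ^ 2 ≤ b * (c + r)) :
    a = k ∧ b = k ∧ c = k ∧ r = k := by
  have hb : b = k := by
    have h₁ : 2 * k ^ 2 ≤ b * (3 * k - b) := h.trans (Nat.mul_le_mul_left _ (by omega))
    have h₂ : k ^ 2 ≤ b * (3 * k - 2 * b) := by
      have := h.trans (Nat.mul_le_mul_left b (by omega : c + r ≤ 2 * (3 * k - 2 * b)))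
      nlinarith
    zify [(by omega : b ≤ 3 * k), (by omega : 2 * b ≤ 3 * k)] at h₁ h₂
    nlinarith
  subst hb
  rcases Nat.eq_zero_or_pos b with rfl | hk
  · omega
  have : 2 * b ≤ c + r := by nlinarith
  omega

section Extremal

variable {n : ℕ} {E : Finset (Finset (Fin n))} {u v w z : Fin n}

lemma lagrangePoly_uniform (hE : IsThreeGraph E) (hext : 27 * #E = n ^ 3) (hn : 0 < n) :
    lagrangePoly E (fun _ => (n : ℝ)⁻¹) = 1 / 27 := by
  have h27 : (27 * #E : ℝ) = n ^ 3 := by exact_mod_cast hext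
  rw [lagrangePoly_const hE]
  field_simp
  linarith

variable (hE : IsThreeGraph E) (hC : Cancellative E) (hext : 27 * #E = n ^ 3)
include hE hC hext

theorem isMaxOn_uniform (hn : 0 < n) :
    IsMaxOn (lagrangePoly E) (stdSimplex ℝ (Fin n)) (fun _ => (n : ℝ)⁻¹) := fun x hx => by
  simpa [lagrangePoly_uniform hE hext hn] using lagrangePoly_le_of_cancellative hE hC hx

theorem nine_mul_degree_eq (v : Fin n) : 9 * degree E v = n ^ 2 := by
  have hn := v.pos
  have h := lagrangePartial_eq_mul_of_isMaxOn hE (uniform_mem_stdSimplex hn)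
    (isMaxOn_uniform hE hC hext hn) (v := v) (by positivity)
  rw [lagrangePartial_const hE, lagrangePoly_uniform hE hext hn, ← degree_eq_card_filter] at h
  norm_num at h
  field_simp at h
  exact_mod_cast (by linarith : (9 * degree E v : ℝ) = n ^ 2)

lemma degree_eq_sq {k : ℕ} (hn : n = 3 * k) (v : Fin n) : degree E v = k ^ 2 := by
  have := nine_mul_degree_eq hE hC hext v
  subst hn
  nlinarith

lemma lagrangePoly_shiftWeight_uniform (huv : u ≠ v) (hadj : ¬ Adjacent E u v) (hn : 0 < n) :
    lagrangePoly E (shiftWeight (fun _ => (n : ℝ)⁻¹) u v (n : ℝ)⁻¹) = 1 / 27 := by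
  have hc : (0 : ℝ) < (n : ℝ)⁻¹ := by positivity
  rw [lagrangePoly_shiftWeight huv, lagrangePartial₂_eq_zero fun e he h => hadj ⟨huv, e, he, h⟩,
    lagrangePartial_eq_of_isMaxOn (uniform_mem_stdSimplex hn) (isMaxOn_uniform hE hC hext hn)
      huv hc hc, lagrangePoly_uniform hE hext hn]
  ring

theorem codegree_eq_of_not_adjacent {a : Fin n} (huv : u ≠ v) (hadj : ¬ Adjacent E u v)
    (hau : a ≠ u) (hav : a ≠ v) : codegree E a u = codegree E a v := by
  have hn := a.pos
  set c : ℝ := (n : ℝ)⁻¹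
  have hc : 0 < c := by positivity
  have hy : shiftWeight (fun _ => c) u v c ∈ stdSimplex ℝ (Fin n) :=
    shiftWeight_mem_stdSimplex (uniform_mem_stdSimplex hn) huv ⟨by show -c ≤ c; linarith, le_rfl⟩
  have hpy := lagrangePoly_shiftWeight_uniform hE hC hext huv hadj hn
  have h := lagrangePartial_eq_mul_of_isMaxOn hE hy
    (fun x hx => le_of_le_of_eq (lagrangePoly_le_of_cancellative hE hC hx) hpy.symm) (v := a)
    (by simp only [shiftWeight_apply_of_ne hau hav, hc])
  rw [lagrangePartial_shiftWeight_const hE huv hadj hau hav, hpy] at h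
  have hdeg : (degree E a : ℝ) * c ^ 2 = 1 / 9 := by
    have : (9 * degree E a : ℝ) = n ^ 2 := by exact_mod_cast nine_mul_degree_eq hE hC hext a
    simp only [c]
    field_simp
    linarith
  have hdiff : ((codegree E a u : ℝ) - codegree E a v) * c ^ 2 = 0 := by linarith
  exact_mod_cast sub_eq_zero.1 ((mul_eq_zero.1 hdiff).resolve_right (by positivity))

theorem nonAdjClass_trans (hvw : w ∈ nonAdjClass E v) (hwz : z ∈ nonAdjClass E w) :
    z ∈ nonAdjClass E v := by
  rw [mem_nonAdjClass] at *
  intro hvz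
  rcases eq_or_ne w v with rfl | hwv
  · exact hwz hvz
  rcases eq_or_ne w z with rfl | hwz'
  · exact hvw hvz
  refine hvw (adjacent_iff_codegree_ne_zero.2 ⟨hwv.symm, ?_⟩)
  rw [codegree_eq_of_not_adjacent hE hC hext hwz' hwz hwv.symm hvz.1]
  exact (adjacent_iff_codegree_ne_zero.1 hvz).2

theorem nonAdjClass_eq_of_mem (h : w ∈ nonAdjClass E v) :
    nonAdjClass E w = nonAdjClass E v := by
  have h' : v ∈ nonAdjClass E w := mem_nonAdjClass.2 fun hwv => mem_nonAdjClass.1 h hwv.symm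
  ext z
  exact ⟨nonAdjClass_trans hE hC hext h, nonAdjClass_trans hE hC hext h'⟩

lemma nonAdjClass_subset_compl (h : w ∉ nonAdjClass E v) :
    nonAdjClass E w ⊆ (nonAdjClass E v)ᶜ := fun z hw => mem_compl.2 fun hv => h <| by
  rw [← nonAdjClass_eq_of_mem hE hC hext hv, nonAdjClass_eq_of_mem hE hC hext hw]
  exact mem_nonAdjClass_self w

theorem exists_three_nonAdjClasses {k : ℕ} (hn : n = 3 * k) (hk : 0 < k) :
    ∃ v₁ v₂ v₃ : Fin n, v₂ ∉ nonAdjClass E v₁ ∧ v₃ ∉ nonAdjClass E v₁ ∧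
      v₃ ∉ nonAdjClass E v₂ ∧ (nonAdjClass E v₁ ∪ nonAdjClass E v₂)ᶜ = nonAdjClass E v₃ ∧
      #(nonAdjClass E v₁) = k ∧ #(nonAdjClass E v₂) = k ∧ #(nonAdjClass E v₃) = k := by
  have hnot {v w} (h : Adjacent E v w) : w ∉ nonAdjClass E v := fun hw => mem_nonAdjClass.1 hw h
  obtain ⟨v₁, -, hv₁⟩ :=
    exists_max_image univ (fun v => #(nonAdjClass E v)) ⟨⟨0, by omega⟩, mem_univ _⟩
  obtain ⟨x, hx⟩ := exists_adjacent_of_degree_pos hE (v := v₁)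
    (by rw [degree_eq_sq hE hC hext hn]; positivity)
  obtain ⟨y, hv₁y, hxy, -⟩ := exists_commonNbrs_subset_nonAdjClass hE hC hx
  obtain ⟨v₂, hv₂, hv₂max⟩ :=
    exists_max_image (nonAdjClass E v₁)ᶜ (fun v => #(nonAdjClass E v)) ⟨x, mem_compl.2 (hnot hx)⟩
  set U := (nonAdjClass E v₁ ∪ nonAdjClass E v₂)ᶜ
  have hU : U.Nonempty := by
    by_cases hx₂ : x ∈ nonAdjClass E v₂
    · refine ⟨y, mem_compl.2 fun hy => (mem_union.1 hy).elim (hnot hv₁y) fun hy₂ => hnot hxy ?_⟩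
      rwa [nonAdjClass_eq_of_mem hE hC hext hx₂]
    · exact ⟨x, by simpa [U] using ⟨hnot hx, hx₂⟩⟩
  obtain ⟨v₃, hv₃, hv₃max⟩ := exists_max_image U (fun v => #(nonAdjClass E v)) hU
  obtain ⟨hv₃₁, hv₃₂⟩ : v₃ ∉ nonAdjClass E v₁ ∧ v₃ ∉ nonAdjClass E v₂ := by simpa [U] using hv₃
  have hC₂ := nonAdjClass_subset_compl hE hC hext (mem_compl.1 hv₂)
  have hC₃ : nonAdjClass E v₃ ⊆ U := by
    simp only [U, compl_union]
    exact subset_inter (nonAdjClass_subset_compl hE hC hext hv₃₁)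
      (nonAdjClass_subset_compl hE hC hext hv₃₂)
  have hbound : 2 * k ^ 2 ≤ #(nonAdjClass E v₂) * (#(nonAdjClass E v₃) + #U) := by
    rw [← degree_eq_sq hE hC hext hn v₁, mul_add, mul_comm _ #U]
    refine two_mul_degree_le hE (fun i hi => by by_cases i ∈ nonAdjClass E v₂ <;> simp_all [U])
      (fun w hw => codegree_le_of_forall_adjacent hE hC ?_ fun z hz hwz => hv₃max z ?_)
      (fun w hw => codegree_le_of_forall_adjacent hE hC ?_ fun z hz _ =>
        hv₂max z (mem_compl.2 (hnot hz)))
    · rintro rfl; exact mem_compl.1 (hC₂ hw) (mem_nonAdjClass_self _)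
    · have h₂ : z ∉ nonAdjClass E v₂ := nonAdjClass_eq_of_mem hE hC hext hw ▸ hnot hwz
      simpa [U] using ⟨hnot hz, h₂⟩
    · rintro rfl; simp [U, mem_nonAdjClass_self] at hw
  have hcount : #(nonAdjClass E v₁) + #(nonAdjClass E v₂) + #U = 3 * k := by
    have := card_compl_add_card (nonAdjClass E v₁ ∪ nonAdjClass E v₂)
    rw [card_union_of_disjoint (disjoint_right.2 fun _ h => mem_compl.1 (hC₂ h)),
      Fintype.card_fin] at this
    change #U + _ = _ at this
    omega
  obtain ⟨h₁, h₂, h₃, hR⟩ := eq_of_two_mul_sq_le_mul hcount (hv₁ v₂ (mem_univ _))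
    (hv₂max v₃ (mem_compl.2 hv₃₁)) (card_le_card hC₃) hbound
  exact ⟨v₁, v₂, v₃, mem_compl.1 hv₂, hv₃₁, hv₃₂,
    (eq_of_subset_of_card_le hC₃ (by omega)).symm, h₁, h₂, h₃⟩

theorem exists_label_eq_iff_not_adjacent {k : ℕ} (hn : n = 3 * k) :
    ∃ P : Fin n → Fin 3, (∀ i j, P i = P j ↔ ¬ Adjacent E i j) ∧ ∀ j, #{i | P i = j} = k := by
  rcases Nat.eq_zero_or_pos k with rfl | hk
  · subst hn
    exact ⟨fun _ => 0, fun i => i.elim0, fun j => by simp⟩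
  obtain ⟨v₁, v₂, v₃, h₂₁, h₃₁, h₃₂, hcover, h₁, h₂, h₃⟩ :=
    exists_three_nonAdjClasses hE hC hext hn hk
  set cls := nonAdjClass E
  have hd₁₂ := nonAdjClass_subset_compl hE hC hext h₂₁
  have hd₁₃ := nonAdjClass_subset_compl hE hC hext h₃₁
  have hd₂₃ := nonAdjClass_subset_compl hE hC hext h₃₂
  have hcover' : ∀ i, i ∉ cls v₁ → i ∉ cls v₂ → i ∈ cls v₃ := fun i h₁ h₂ =>
    hcover ▸ by simp [h₁, h₂]
  let r : Fin 3 → Fin n := ![v₁, v₂, v₃]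
  let P : Fin n → Fin 3 := fun i => if i ∈ cls v₁ then 0 else if i ∈ cls v₂ then 1 else 2
  have hP : ∀ i m, i ∈ cls (r m) ↔ P i = m := by
    intro i m
    fin_cases m <;> by_cases hi₁ : i ∈ cls v₁ <;> by_cases hi₂ : i ∈ cls v₂ <;>
      simp_all [r, P, subset_iff] <;> grind
  refine ⟨P, fun i j => ?_, fun m => ?_⟩
  · rw [← mem_nonAdjClass, nonAdjClass_eq_of_mem hE hC hext ((hP i (P i)).2 rfl), hP, eq_comm]
  · rw [show ({i | P i = m} : Finset _) = cls (r m) by ext i; simp [hP]]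
    fin_cases m <;> assumption

end Extremal

theorem isoTo_T3_of_extremal {n k : ℕ} {E : Finset (Finset (Fin n))} (hE : IsThreeGraph E)
    (hC : Cancellative E) (hext : 27 * #E = n ^ 3) (hn : n = 3 * k) : IsoTo E (T3 n) := by
  obtain ⟨P, hP, hcard⟩ := exists_label_eq_iff_not_adjacent hE hC hext hn
  rw [eq_tripartite_of_label_eq_iff hE hC (degree_eq_sq hE hC hext hn) hP hcard, T3_eq_tripartite]
  refine isoTo_tripartite fun j => ?_
  obtain ⟨h₀, h₁, h₂⟩ := card_part3 n
  rw [hcard]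
  fin_cases j <;> simp <;> omega

/-- For `n ≡ 0 (mod 3)`, a cancellative 3-graph on `n` vertices has at most
`t_3(n) = n³/27` edges, with equality iff it is isomorphic to `T_3(n)`. -/
theorem cancellative_card_le_of_three_dvd {n : ℕ} (hn : n % 3 = 0)
    (E : Finset (Finset (Fin n))) (hE : IsThreeGraph E) (hC : Cancellative E) :
    t3 n = n ^ 3 / 27 ∧ E.card ≤ t3 n ∧ (E.card = t3 n ↔ IsoTo E (T3 n)) := by
  obtain ⟨k, rfl⟩ : ∃ k, n = 3 * k := ⟨n / 3, by omega⟩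
  have ht3 : t3 (3 * k) = k ^ 3 := by
    rw [t3, show 3 * k / 3 = k by omega, show (3 * k + 1) / 3 = k by omega,
      show (3 * k + 2) / 3 = k by omega]
    ring
  have hcube : (3 * k) ^ 3 = 27 * k ^ 3 := by ring
  have hle := hC.card_le hE
  refine ⟨by omega, by omega, ⟨fun h => isoTo_T3_of_extremal hE hC (by omega) rfl, fun h => ?_⟩⟩
  rw [h.card_eq, card_T3]
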